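/- arXiv:2401.15200 — 2 statements merged into one kernel-verified Lean document; each statement's English description precedes it below -/
import Mathlib

section
/- For distinct positive integers m and m', the groups BS(m,-m) and BS(m',-m') are not isomorphic. -/
/-- Relator set for the Baumslag–Solitar group BS(m,n) = ⟨a, t | t a^m t⁻¹ = a^n⟩,
with generator `0 : Fin 2` playing the role of `a` and `1 : Fin 2` that of `t`. -/
def BSrel (m n : ℤ) : Set (FreeGroup (Fin 2)) :=
  {FreeGroup.of 1 * FreeGroup.of 0 ^ m * (FreeGroup.of 1)⁻¹ * (FreeGroup.of 0 ^ n)⁻¹}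

/-- The Baumslag–Solitar group BS(m,n). -/
def BS (m n : ℤ) : Type := PresentedGroup (BSrel m n)

instance (m n : ℤ) : Group (BS m n) :=
  inferInstanceAs (Group (PresentedGroup (BSrel m n)))

section Hom

variable {A : Type*} [CommGroup A]

lemma BS_comm_identity (m n : ℤ) (x y : A) :
    y * x ^ m * y⁻¹ * (x ^ n)⁻¹ = x ^ (m - n) := by
  rw [mul_comm y (x ^ m), mul_assoc, mul_assoc, ← mul_assoc y, mul_inv_cancel, one_mul,
    ← zpow_neg, ← zpow_add, sub_eq_add_neg]

lemma BS_lift_rel (m n : ℤ) (f : Fin 2 → A) :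
    FreeGroup.lift f (FreeGroup.of 1 * FreeGroup.of 0 ^ m * (FreeGroup.of 1)⁻¹ *
      (FreeGroup.of 0 ^ n)⁻¹) = (f 0) ^ (m - n) := by
  simp only [map_mul, map_inv, map_zpow, FreeGroup.lift_apply_of]
  exact BS_comm_identity m n (f 0) (f 1)

/-- Homomorphisms from BS(m,n) to a commutative group correspond to pairs. -/
noncomputable def bsHomEquiv (m n : ℤ) :
    (BS m n →* A) ≃ {x : A // x ^ (m - n) = 1} × A where
  toFun φ :=
    ⟨⟨φ (PresentedGroup.of 0), by
      have hmem : (FreeGroup.of 1 * FreeGroup.of 0 ^ m * (FreeGroup.of 1)⁻¹ *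
          (FreeGroup.of 0 ^ n)⁻¹ : FreeGroup (Fin 2)) ∈ Subgroup.normalClosure (BSrel m n) :=
        Subgroup.subset_normalClosure rfl
      have hr : (PresentedGroup.mk (BSrel m n))
          (FreeGroup.of 1 * FreeGroup.of 0 ^ m * (FreeGroup.of 1)⁻¹ *
            (FreeGroup.of 0 ^ n)⁻¹) = 1 := (QuotientGroup.eq_one_iff _).2 hmem
      have := congrArg (φ : PresentedGroup (BSrel m n) →* A) hr
      let ψ : PresentedGroup (BSrel m n) →* A := φ
      have h2 : ψ (PresentedGroup.mk (BSrel m n) (FreeGroup.of 1 * FreeGroup.of 0 ^ m * (FreeGroup.of 1)⁻¹ *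
              (FreeGroup.of 0 ^ n)⁻¹)) = 1 := by rw [hr, map_one]
      simp only [map_mul, map_inv, map_zpow] at h2
      change ψ (PresentedGroup.of 0) ^ (m - n) = 1
      rw [← h2]
      exact (BS_comm_identity m n _ (ψ (PresentedGroup.of 1))).symm⟩,
      φ (PresentedGroup.of 1)⟩
  invFun p := PresentedGroup.toGroup (f := ![p.1.1, p.2]) (by
    rintro r hr
    simp only [BSrel, Set.mem_singleton_iff] at hr
    subst hr
    rw [BS_lift_rel]
    simpa using p.1.2)
  left_inv φ := by
    apply (PresentedGroup.ext (rels := BSrel m n)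
      (φ := PresentedGroup.toGroup _) (ψ := φ) ?_)
    intro x
    fin_cases x <;> simp [PresentedGroup.toGroup.of] <;> rfl
  right_inv p := by
    ext
    · show PresentedGroup.toGroup _ (PresentedGroup.of 0) = p.1.1
      rw [PresentedGroup.toGroup.of]
      simp
    · show PresentedGroup.toGroup _ (PresentedGroup.of 1) = p.2
      rw [PresentedGroup.toGroup.of]
      simp

end Hom

lemma card_mulker (k d N : ℕ) (hk : 0 < k) (hd : 0 < d) (hN : N = k * d) :
    Nat.card {x : ZMod N // (k : ZMod N) * x = 0} = k := by
  subst hN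
  have hkd : 0 < k * d := Nat.mul_pos hk hd
  haveI : NeZero (k * d) := ⟨hkd.ne'⟩
  haveI : NeZero k := ⟨hk.ne'⟩
  have e : ZMod k ≃ {x : ZMod (k * d) // (k : ZMod (k * d)) * x = 0} := by
    refine Equiv.ofBijective (fun j => ⟨((d * j.val : ℕ) : ZMod (k * d)), ?_⟩) ⟨?_, ?_⟩
    · push_cast
      rw [← mul_assoc, ← Nat.cast_mul, ZMod.natCast_self, zero_mul]
    · intro j j' hjj'
      have h1 : ((d * j.val : ℕ) : ZMod (k * d)) = ((d * j'.val : ℕ) : ZMod (k * d)) :=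
        congrArg Subtype.val hjj'
      rw [ZMod.natCast_eq_natCast_iff', Nat.mod_eq_of_lt, Nat.mod_eq_of_lt] at h1
      · have := Nat.eq_of_mul_eq_mul_left hd h1
        exact ZMod.val_injective _ this
      · calc d * j'.val < d * k := (Nat.mul_lt_mul_left hd).2 (ZMod.val_lt j')
          _ = k * d := Nat.mul_comm d k
      · calc d * j.val < d * k := (Nat.mul_lt_mul_left hd).2 (ZMod.val_lt j)
          _ = k * d := Nat.mul_comm d k
    · rintro ⟨x, hx⟩
      have hdvd : (k * d) ∣ k * x.val := by
        rw [← ZMod.natCast_eq_zero_iff]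
        push_cast
        rw [ZMod.natCast_val, ZMod.cast_id]
        exact hx
      have hd2 : d ∣ x.val := (mul_dvd_mul_iff_left hk.ne').mp hdvd
      obtain ⟨j, hj⟩ := hd2
      have hjk : j < k := by
        by_contra hle
        push_neg at hle
        have : k * d ≤ d * j := by
          calc k * d = d * k := Nat.mul_comm k d
            _ ≤ d * j := Nat.mul_le_mul_left d hle
        have := ZMod.val_lt x
        omega
      refine ⟨(j : ZMod k), Subtype.ext ?_⟩
      show ((d * (j : ZMod k).val : ℕ) : ZMod (k * d)) = x
      rw [ZMod.val_natCast_of_lt hjk, ← hj, ZMod.natCast_val, ZMod.cast_id]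
  rw [← Nat.card_congr e, Nat.card_zmod]

lemma card_torsion (m d N : ℕ) (hm : 0 < m) (hd : 0 < d) (hN : N = 2 * m * d) :
    Nat.card {x : Multiplicative (ZMod N) // x ^ ((m : ℤ) - (-(m : ℤ))) = 1} = 2 * m := by
  have hiff : ∀ x : Multiplicative (ZMod N),
      x ^ ((m : ℤ) - (-(m : ℤ))) = 1 ↔
        ((2 * m : ℕ) : ZMod N) * Multiplicative.toAdd x = 0 := by
    intro x
    rw [show ((m : ℤ) - (-(m : ℤ))) = ((2 * m : ℕ) : ℤ) by push_cast; ring, zpow_natCast]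
    constructor
    · intro hx
      have := congrArg Multiplicative.toAdd hx
      simpa [nsmul_eq_mul] using this
    · intro hx
      have : Multiplicative.toAdd (x ^ (2 * m)) =
          Multiplicative.toAdd (1 : Multiplicative (ZMod N)) := by
        simpa [nsmul_eq_mul] using hx
      exact Multiplicative.toAdd.injective this
  have e : {x : Multiplicative (ZMod N) // x ^ ((m : ℤ) - (-(m : ℤ))) = 1} ≃
      {y : ZMod N // ((2 * m : ℕ) : ZMod N) * y = 0} :=
    Equiv.subtypeEquiv Multiplicative.toAdd hiff
  rw [Nat.card_congr e, card_mulker (2 * m) d N (by omega) hd hN]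

theorem BS_m_neg_m_not_iso (m m' : ℕ) (hm : 0 < m) (hm' : 0 < m') (h : m ≠ m') :
    IsEmpty (BS m (-(m : ℤ)) ≃* BS m' (-(m' : ℤ))) := by
  refine ⟨fun e => h ?_⟩
  set N : ℕ := 2 * m * m' with hNdef
  have hN : 0 < N := by positivity
  let A := Multiplicative (ZMod N)
  have E : (BS m' (-(m' : ℤ)) →* A) ≃ (BS m (-(m : ℤ)) →* A) :=
    { toFun := fun φ => φ.comp e.toMonoidHom
      invFun := fun ψ => ψ.comp e.symm.toMonoidHom
      left_inv := fun φ => by ext x; simp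
      right_inv := fun ψ => by ext x; simp }
  have cardA : Nat.card A = N := by
    rw [Nat.card_congr (Multiplicative.toAdd (α := ZMod N)), Nat.card_zmod]
  have c1 : Nat.card (BS m (-(m : ℤ)) →* A) = 2 * m * N := by
    rw [Nat.card_congr (bsHomEquiv (A := A) (m : ℤ) (-(m : ℤ))), Nat.card_prod,
      card_torsion m m' N hm hm' rfl, cardA]
  have c2 : Nat.card (BS m' (-(m' : ℤ)) →* A) = 2 * m' * N := by
    rw [Nat.card_congr (bsHomEquiv (A := A) (m' : ℤ) (-(m' : ℤ))), Nat.card_prod,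
      card_torsion m' m N hm' hm (by ring), cardA]
  have : 2 * m' * N = 2 * m * N := by rw [← c1, ← c2, Nat.card_congr E]
  have := Nat.eq_of_mul_eq_mul_right hN this
  omega
end

section
/- If G₁ and G₂ are groups whose profinite completions are isomorphic (as topological groups), then their abelianizations have isomorphic profinite completions; in particular, if the abelianizations are finitely generated abelian groups, they are isomorphic. -/
/-- The index category for the profinite completion: finite-index normal subgroups. -/
structure FinIndexNormal (G : Type*) [Group G] where
  N : Subgroup G
  normal : N.Normal
  finiteIndex : N.FiniteIndex

instance {G : Type*} [Group G] (N : FinIndexNormal G) : N.N.Normal := N.normal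
instance {G : Type*} [Group G] (N : FinIndexNormal G) : N.N.FiniteIndex := N.finiteIndex

/-- The transition map `G ⧸ N → G ⧸ M` for `N ≤ M`. -/
def transMap {G : Type*} [Group G] (N M : FinIndexNormal G) (h : N.N ≤ M.N) :
    G ⧸ N.N →* G ⧸ M.N :=
  QuotientGroup.map N.N M.N (MonoidHom.id G) (by simpa using h)

/-- The profinite completion of `G`, as a subgroup of the product of all finite
quotients `G ⧸ N`: the compatible families. -/
def profiniteCompletionSubgroup (G : Type*) [Group G] :
    Subgroup (Π N : FinIndexNormal G, G ⧸ N.N) where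
  carrier := {x | ∀ (N M : FinIndexNormal G) (h : N.N ≤ M.N), transMap N M h (x N) = x M}
  one_mem' := by intro N M h; simp
  mul_mem' := by intro x y hx hy N M h; simp [hx N M h, hy N M h]
  inv_mem' := by intro x hx N M h; simp [← hx N M h]

/-- The profinite completion of a group `G`: the inverse limit of its finite
quotients `G ⧸ N` over finite-index normal subgroups `N`. -/
def ProfiniteCompletion (G : Type*) [Group G] : Type _ :=
  profiniteCompletionSubgroup G

instance (G : Type*) [Group G] : Group (ProfiniteCompletion G) :=
  inferInstanceAs (Group (profiniteCompletionSubgroup G))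

/-- Each finite quotient carries the discrete topology. -/
instance {G : Type*} [Group G] (N : FinIndexNormal G) : TopologicalSpace (G ⧸ N.N) := ⊥

instance (G : Type*) [Group G] : TopologicalSpace (ProfiniteCompletion G) :=
  inferInstanceAs (TopologicalSpace (profiniteCompletionSubgroup G))

/-- The natural map `ι : G → Ĝ`, sending `g` to the compatible family `(gN)`. -/
def profiniteCompletionMap (G : Type*) [Group G] : G →* ProfiniteCompletion G where
  toFun g := ⟨fun N => QuotientGroup.mk g, fun N M h => rfl⟩
  map_one' := Subtype.ext (funext fun N => rfl)
  map_mul' x y := Subtype.ext (funext fun N => rfl)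

/-- A group is residually finite if every nontrivial element survives in some
finite quotient. -/
def ResiduallyFinite (G : Type*) [Group G] : Prop :=
  ∀ g : G, g ≠ 1 → ∃ N : Subgroup G, N.Normal ∧ N.FiniteIndex ∧ g ∉ N


namespace PCP

open QuotientGroup

variable {G H K : Type*} [Group G] [Group H] [Group K]

lemma FinIndexNormal.ext' {N M : FinIndexNormal G} (h : N.N = M.N) : N = M := by
  cases N; cases M; cases h; rfl

instance (N : FinIndexNormal G) : DiscreteTopology (G ⧸ N.N) := ⟨rfl⟩

instance (N : FinIndexNormal G) : Finite (G ⧸ N.N) :=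
  N.N.finite_quotient_of_finiteIndex

/-- projection to a finite quotient -/
def proj (N : FinIndexNormal G) : ProfiniteCompletion G →* G ⧸ N.N :=
  (Pi.evalMonoidHom (fun N : FinIndexNormal G => G ⧸ N.N) N).comp
    (profiniteCompletionSubgroup G).subtype

lemma proj_continuous (N : FinIndexNormal G) : Continuous (proj N) :=
  (continuous_apply N).comp continuous_subtype_val

@[simp] lemma proj_apply (N : FinIndexNormal G) (x : ProfiniteCompletion G) :
    proj N x = x.1 N := rfl

lemma proj_compat {N M : FinIndexNormal G} (h : N.N ≤ M.N) (x : ProfiniteCompletion G) :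
    transMap N M h (proj N x) = proj M x := x.2 N M h

@[simp] lemma proj_iota (N : FinIndexNormal G) (g : G) :
    proj N (profiniteCompletionMap G g) = QuotientGroup.mk g := rfl

@[simp] lemma transMap_mk {N M : FinIndexNormal G} (h : N.N ≤ M.N) (g : G) :
    transMap N M h (QuotientGroup.mk g) = QuotientGroup.mk g := rfl

instance (N : FinIndexNormal G) : IsTopologicalGroup (G ⧸ N.N) :=
  { continuous_mul := continuous_of_discreteTopology
    continuous_inv := continuous_of_discreteTopology }

instance : IsTopologicalGroup (ProfiniteCompletion G) :=
  inferInstanceAs (IsTopologicalGroup (profiniteCompletionSubgroup G))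

instance : T2Space (ProfiniteCompletion G) :=
  inferInstanceAs (T2Space (profiniteCompletionSubgroup G))

/-- intersections give finite index normal subgroups -/
def interFin (s : Finset (FinIndexNormal G)) : FinIndexNormal G := by
  refine ⟨⨅ N ∈ s, N.N, ?_, ?_⟩
  · constructor
    intro n hn g
    simp only [Subgroup.mem_iInf] at hn ⊢
    intro N hN
    exact (N.normal).conj_mem n (hn N hN) g
  · exact Subgroup.finiteIndex_iInf' _ (fun N _ => N.finiteIndex)

lemma interFin_le {s : Finset (FinIndexNormal G)} {N : FinIndexNormal G} (h : N ∈ s) :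
    (interFin s).N ≤ N.N := by
  intro x hx
  simp only [interFin, Subgroup.mem_iInf] at hx
  exact hx N h

lemma denseRange_iota : DenseRange (profiniteCompletionMap G) := by
  intro x
  rw [mem_closure_iff]
  intro o ho hxo
  replace ho := isOpen_induced_iff.1 (show IsOpen (X := ↥(profiniteCompletionSubgroup G)) o from ho)
  obtain ⟨U, hU, rfl⟩ := ho
  obtain ⟨I, u, hu, hsub⟩ := isOpen_pi_iff.1 hU x.1 hxo
  obtain ⟨g, hg⟩ := QuotientGroup.mk_surjective (x.1 (interFin I))
  refine ⟨profiniteCompletionMap G g, ?_, ⟨g, rfl⟩⟩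
  show (profiniteCompletionMap G g).1 ∈ U
  apply hsub
  intro N hN
  have h2 : (profiniteCompletionMap G g).1 N = x.1 N := by
    show QuotientGroup.mk g = x.1 N
    rw [← x.2 (interFin I) N (interFin_le hN), ← hg]
    rfl
  rw [h2]
  exact (hu N hN).2

end PCP

section Ext
variable {G H K : Type*} [Group G] [Group H] [Group K]
variable {Q : Type*} [Group Q] [Finite Q]

open QuotientGroup PCP

namespace PCP

/-- the kernel of a hom to a finite group, as a FinIndexNormal -/
def finKer (f : G →* Q) : FinIndexNormal G := ⟨f.ker, inferInstance, inferInstance⟩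

/-- extension of `f : G →* Q` to the profinite completion -/
noncomputable def pcExt (f : G →* Q) : ProfiniteCompletion G →* Q :=
  (QuotientGroup.kerLift f).comp (proj (finKer f))

@[simp] lemma pcExt_iota (f : G →* Q) (g : G) :
    pcExt f (profiniteCompletionMap G g) = f g := by
  rfl

lemma pcExt_comp_iota (f : G →* Q) :
    (pcExt f).comp (profiniteCompletionMap G) = f := by
  ext g; simp

lemma pcExt_continuous [TopologicalSpace Q] [DiscreteTopology Q] (f : G →* Q) :
    Continuous (pcExt f) := by
  have h1 : Continuous (fun y : G ⧸ (finKer f).N => QuotientGroup.kerLift f y) :=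
    continuous_of_discreteTopology
  exact h1.comp (proj_continuous (finKer f))

/-- two continuous maps on the completion agreeing on `G` agree -/
lemma cont_ext {X : Type*} [TopologicalSpace X] [T2Space X]
    {F F' : ProfiniteCompletion G → X} (hF : Continuous F) (hF' : Continuous F')
    (h : ∀ g, F (profiniteCompletionMap G g) = F' (profiniteCompletionMap G g)) : F = F' := by
  apply Continuous.ext_on denseRange_iota hF hF'
  rintro x ⟨g, rfl⟩
  exact h g

lemma hom_ext_cont {X : Type*} [Group X] [TopologicalSpace X] [T2Space X]
    {F F' : ProfiniteCompletion G →* X} (hF : Continuous F) (hF' : Continuous F')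
    (h : ∀ g, F (profiniteCompletionMap G g) = F' (profiniteCompletionMap G g)) : F = F' :=
  MonoidHom.ext (funext_iff.1 (cont_ext hF hF' h))

end PCP
end Ext

section Map
variable {G H K : Type*} [Group G] [Group H] [Group K]

open QuotientGroup PCP

namespace PCP

@[simp] lemma coord_one (N : FinIndexNormal G) : (1 : ProfiniteCompletion G).1 N = 1 := rfl
@[simp] lemma coord_mul (x y : ProfiniteCompletion G) (N : FinIndexNormal G) :
    (x * y).1 N = x.1 N * y.1 N := rfl
@[simp] lemma coord_iota (g : G) (N : FinIndexNormal G) :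
    (profiniteCompletionMap G g).1 N = QuotientGroup.mk g := rfl
@[simp] lemma coord_pow (x : ProfiniteCompletion G) (n : ℕ) (N : FinIndexNormal G) :
    (x ^ n).1 N = (x.1 N) ^ n := rfl
@[simp] lemma coord_inv (x : ProfiniteCompletion G) (N : FinIndexNormal G) :
    (x⁻¹).1 N = (x.1 N)⁻¹ := rfl

lemma pc_ext {x y : ProfiniteCompletion G} (h : ∀ N, x.1 N = y.1 N) : x = y :=
  Subtype.ext (funext h)

/-- `G →* H ⧸ N` induced by `f` -/
def pf (f : G →* H) (N : FinIndexNormal H) : G →* H ⧸ N.N :=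
  (QuotientGroup.mk' N.N).comp f

lemma ker_pf_le {f : G →* H} {N M : FinIndexNormal H} (h : N.N ≤ M.N) :
    (finKer (pf f N)).N ≤ (finKer (pf f M)).N := by
  intro g hg
  have : f g ∈ N.N := by
    simpa [finKer, pf, MonoidHom.mem_ker, QuotientGroup.eq_one_iff] using hg
  simpa [finKer, pf, MonoidHom.mem_ker, QuotientGroup.eq_one_iff] using h this

noncomputable def pcMapFun (f : G →* H) (x : ProfiniteCompletion G) :
    ProfiniteCompletion H := by
  refine ⟨fun N => QuotientGroup.kerLift (pf f N) (x.1 (finKer (pf f N))), ?_⟩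
  intro N M h
  show transMap N M h (QuotientGroup.kerLift (pf f N) (x.1 (finKer (pf f N)))) =
      QuotientGroup.kerLift (pf f M) (x.1 (finKer (pf f M)))
  obtain ⟨a, ha⟩ := QuotientGroup.mk_surjective (x.1 (finKer (pf f N)))
  have hM : x.1 (finKer (pf f M)) = QuotientGroup.mk a := by
    rw [← x.2 (finKer (pf f N)) (finKer (pf f M)) (ker_pf_le h), ← ha]; rfl
  rw [← ha, hM]
  rfl

@[simp] lemma pcMapFun_coord (f : G →* H) (x : ProfiniteCompletion G) (N : FinIndexNormal H) :
    (pcMapFun f x).1 N = QuotientGroup.kerLift (pf f N) (x.1 (finKer (pf f N))) := rfl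

/-- functoriality of the profinite completion -/
noncomputable def pcMap (f : G →* H) : ProfiniteCompletion G →* ProfiniteCompletion H where
  toFun := pcMapFun f
  map_one' := pc_ext (fun N => by
    rw [pcMapFun_coord, coord_one, coord_one]; exact map_one _)
  map_mul' x y := pc_ext (fun N => by
    rw [pcMapFun_coord, coord_mul]
    exact map_mul (QuotientGroup.kerLift (pf f N)) _ _)

@[simp] lemma pcMap_iota (f : G →* H) (g : G) :
    pcMap f (profiniteCompletionMap G g) = profiniteCompletionMap H (f g) :=
  pc_ext (fun N => QuotientGroup.kerLift_mk (pf f N) g)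

lemma pcMap_continuous (f : G →* H) : Continuous (pcMap f) := by
  apply Continuous.subtype_mk
  apply continuous_pi
  intro N
  have h1 : Continuous (fun y : G ⧸ (finKer (pf f N)).N => QuotientGroup.kerLift (pf f N) y) :=
    continuous_of_discreteTopology
  exact h1.comp (proj_continuous (finKer (pf f N)))

lemma pcMap_id : pcMap (MonoidHom.id G) = MonoidHom.id (ProfiniteCompletion G) :=
  hom_ext_cont (pcMap_continuous _) continuous_id (by intro g; simp)

lemma pcMap_comp (f₁ : G →* H) (f₂ : H →* K) :
    pcMap (f₂.comp f₁) = (pcMap f₂).comp (pcMap f₁) := by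
  have hc : Continuous (fun x => pcMap f₂ (pcMap f₁ x)) :=
    (pcMap_continuous f₂).comp (pcMap_continuous f₁)
  exact hom_ext_cont (pcMap_continuous _) hc (by intro g; simp)

/-- congruence of profinite completions -/
noncomputable def pcCongr (e : G ≃* H) : ProfiniteCompletion G ≃* ProfiniteCompletion H where
  toFun := pcMap e.toMonoidHom
  invFun := pcMap e.symm.toMonoidHom
  left_inv x := by
    have h1 : e.symm.toMonoidHom.comp e.toMonoidHom = MonoidHom.id G := by ext g; simp
    have h2 := DFunLike.congr_fun ((pcMap_comp e.toMonoidHom e.symm.toMonoidHom).symm.trans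
      (by rw [h1, pcMap_id])) x
    simpa using h2
  right_inv x := by
    have h1 : e.toMonoidHom.comp e.symm.toMonoidHom = MonoidHom.id H := by ext g; simp
    have h2 := DFunLike.congr_fun ((pcMap_comp e.symm.toMonoidHom e.toMonoidHom).symm.trans
      (by rw [h1, pcMap_id])) x
    simpa using h2
  map_mul' := map_mul _

@[simp] lemma pcCongr_apply (e : G ≃* H) (x : ProfiniteCompletion G) :
    pcCongr e x = pcMap e.toMonoidHom x := rfl

end PCP
end Map

section Ab
variable {G H K : Type*} [Group G] [Group H] [Group K]

open QuotientGroup PCP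

namespace PCP

/-- generic limit hom from a compatible family -/
noncomputable def limHomFun (q : ∀ N : FinIndexNormal G, H →* G ⧸ N.N)
    (hq : ∀ {N M : FinIndexNormal G} (h : N.N ≤ M.N), (transMap N M h).comp (q N) = q M)
    (x : ProfiniteCompletion H) : ProfiniteCompletion G := by
  refine ⟨fun N => QuotientGroup.kerLift (q N) (x.1 (finKer (q N))), ?_⟩
  intro N M h
  have hker : (finKer (q N)).N ≤ (finKer (q M)).N := by
    intro a haa
    have h1 : q N a = 1 := haa
    show q M a = 1
    rw [← hq h, MonoidHom.comp_apply, h1, map_one]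
  show transMap N M h (QuotientGroup.kerLift (q N) (x.1 (finKer (q N)))) =
      QuotientGroup.kerLift (q M) (x.1 (finKer (q M)))
  obtain ⟨a, ha⟩ := QuotientGroup.mk_surjective (x.1 (finKer (q N)))
  have hM : x.1 (finKer (q M)) = QuotientGroup.mk a := by
    rw [← x.2 (finKer (q N)) (finKer (q M)) hker, ← ha]; rfl
  rw [← ha, hM]
  exact DFunLike.congr_fun (hq h) a

@[simp] lemma limHomFun_coord (q : ∀ N : FinIndexNormal G, H →* G ⧸ N.N) (hq) (x) (N) :
    (limHomFun q hq x).1 N = QuotientGroup.kerLift (q N) (x.1 (finKer (q N))) := rfl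

noncomputable def limHom (q : ∀ N : FinIndexNormal G, H →* G ⧸ N.N)
    (hq : ∀ {N M : FinIndexNormal G} (h : N.N ≤ M.N), (transMap N M h).comp (q N) = q M) :
    ProfiniteCompletion H →* ProfiniteCompletion G where
  toFun := limHomFun q hq
  map_one' := pc_ext (fun N => by
    rw [limHomFun_coord, coord_one, coord_one]; exact map_one _)
  map_mul' x y := pc_ext (fun N => by
    rw [limHomFun_coord, coord_mul]
    exact map_mul (QuotientGroup.kerLift (q N)) _ _)

@[simp] lemma limHom_coord (q : ∀ N : FinIndexNormal G, H →* G ⧸ N.N) (hq) (x) (N) :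
    (limHom q hq x).1 N = QuotientGroup.kerLift (q N) (x.1 (finKer (q N))) := rfl

lemma limHom_continuous (q : ∀ N : FinIndexNormal G, H →* G ⧸ N.N) (hq) :
    Continuous (limHom q hq) := by
  apply Continuous.subtype_mk
  apply continuous_pi
  intro N
  have h1 : Continuous (fun y : H ⧸ (finKer (q N)).N => QuotientGroup.kerLift (q N) y) :=
    continuous_of_discreteTopology
  exact h1.comp (proj_continuous (finKer (q N)))

@[simp] lemma limHom_iota (q : ∀ N : FinIndexNormal G, H →* G ⧸ N.N) (hq) (h : H) (N) :
    (limHom q hq (profiniteCompletionMap H h)).1 N = q N h :=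
  QuotientGroup.kerLift_mk (q N) h

/-- `G →* (Abelianization G) ⧸ N` -/
def pA (N : FinIndexNormal (Abelianization G)) : G →* Abelianization G ⧸ N.N :=
  (QuotientGroup.mk' N.N).comp Abelianization.of

lemma trans_pcExt_pA {N M : FinIndexNormal (Abelianization G)} (h : N.N ≤ M.N) :
    (transMap N M h).comp (pcExt (pA N)) = pcExt (pA M) := by
  have hc1 : Continuous (fun y => transMap N M h (pcExt (pA N) y)) := by
    have := (pcExt_continuous (pA N))
    exact continuous_of_discreteTopology.comp this
  exact hom_ext_cont hc1 (pcExt_continuous _) (by intro g; simp [pA])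

/-- the hom `Abelianization H →* Abelianization G ⧸ N` induced by `φ` -/
noncomputable def gbar (φ : ProfiniteCompletion H →* ProfiniteCompletion G)
    (N : FinIndexNormal (Abelianization G)) :
    Abelianization H →* Abelianization G ⧸ N.N :=
  Abelianization.lift (((pcExt (pA N)).comp φ).comp (profiniteCompletionMap H))

@[simp] lemma gbar_of (φ : ProfiniteCompletion H →* ProfiniteCompletion G)
    (N : FinIndexNormal (Abelianization G)) (h : H) :
    gbar φ N (Abelianization.of h) = pcExt (pA N) (φ (profiniteCompletionMap H h)) :=
  Abelianization.lift_apply_of (f := _) h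

lemma gbar_compat (φ : ProfiniteCompletion H →* ProfiniteCompletion G)
    {N M : FinIndexNormal (Abelianization G)} (h : N.N ≤ M.N) :
    (transMap N M h).comp (gbar φ N) = gbar φ M := by
  apply Abelianization.hom_ext
  ext g
  simp only [MonoidHom.comp_apply, gbar_of]
  rw [← MonoidHom.comp_apply (transMap N M h), trans_pcExt_pA h]

/-- the induced map on completions of abelianizations -/
noncomputable def abMap (φ : ProfiniteCompletion H →* ProfiniteCompletion G) :
    ProfiniteCompletion (Abelianization H) →* ProfiniteCompletion (Abelianization G) :=
  limHom (gbar φ) (fun h => gbar_compat φ h)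

lemma gbar_comp (φ : ProfiniteCompletion H →* ProfiniteCompletion G) (hφ : Continuous φ)
    (ψ : ProfiniteCompletion K →* ProfiniteCompletion H)
    (N : FinIndexNormal (Abelianization G)) :
    (QuotientGroup.kerLift (gbar φ N)).comp (gbar ψ (finKer (gbar φ N))) = gbar (φ.comp ψ) N := by
  have key : (QuotientGroup.kerLift (gbar φ N)).comp (pcExt (pA (G := H) (finKer (gbar φ N))))
      = (pcExt (pA (G := G) N)).comp φ := by
    have hc1 : Continuous (fun y =>
        QuotientGroup.kerLift (gbar φ N) (pcExt (pA (finKer (gbar φ N))) y)) := by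
      have h2 : Continuous (fun z : Abelianization H ⧸ (finKer (gbar φ N)).N =>
          QuotientGroup.kerLift (gbar φ N) z) := continuous_of_discreteTopology
      exact h2.comp (pcExt_continuous _)
    have hc2 : Continuous (fun y => pcExt (pA (G := G) N) (φ y)) :=
      (pcExt_continuous _).comp hφ
    apply hom_ext_cont hc1 hc2
    intro g
    show QuotientGroup.kerLift (gbar φ N) (pcExt (pA (finKer (gbar φ N)))
      (profiniteCompletionMap H g)) = _
    rw [pcExt_iota]
    show QuotientGroup.kerLift (gbar φ N) (QuotientGroup.mk (Abelianization.of g)) = _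
    rw [QuotientGroup.kerLift_mk, gbar_of]
    rfl
  apply Abelianization.hom_ext
  ext k
  simp only [MonoidHom.comp_apply, gbar_of]
  exact DFunLike.congr_fun key (ψ (profiniteCompletionMap K k))

lemma abMap_comp (φ : ProfiniteCompletion H →* ProfiniteCompletion G) (hφ : Continuous φ)
    (ψ : ProfiniteCompletion K →* ProfiniteCompletion H) (x) :
    abMap φ (abMap ψ x) = abMap (φ.comp ψ) x := by
  apply pc_ext
  intro N
  have hc := DFunLike.congr_fun (gbar_comp φ hφ ψ N)
  replace hc : ∀ a, QuotientGroup.kerLift (gbar φ N) (gbar ψ (finKer (gbar φ N)) a) =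
      gbar (φ.comp ψ) N a := fun a => hc a
  have hker : finKer (gbar (φ.comp ψ) N) = finKer (gbar ψ (finKer (gbar φ N))) := by
    apply FinIndexNormal.ext'
    ext a
    constructor
    · intro haa
      have haa' : gbar (φ.comp ψ) N a = 1 := haa
      have h1 : QuotientGroup.kerLift (gbar φ N) (gbar ψ (finKer (gbar φ N)) a) =
          QuotientGroup.kerLift (gbar φ N) 1 :=
        ((hc a).trans haa').trans (map_one _).symm
      exact QuotientGroup.kerLift_injective _ h1
    · intro haa
      have haa' : gbar ψ (finKer (gbar φ N)) a = 1 := haa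
      show gbar (φ.comp ψ) N a = 1
      exact (hc a).symm.trans ((congrArg _ haa').trans (map_one _))
  simp only [abMap, limHom_coord]
  obtain ⟨a, ha⟩ := QuotientGroup.mk_surjective (x.1 (finKer (gbar ψ (finKer (gbar φ N)))))
  have ha' : x.1 (finKer (gbar (φ.comp ψ) N)) = QuotientGroup.mk a := by rw [hker, ← ha]
  rw [← ha, ha']
  exact hc a

lemma abMap_id (x : ProfiniteCompletion (Abelianization G)) :
    abMap (MonoidHom.id (ProfiniteCompletion G)) x = x := by
  apply pc_ext
  intro N
  have hg : gbar (MonoidHom.id (ProfiniteCompletion G)) N = QuotientGroup.mk' N.N := by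
    apply Abelianization.hom_ext
    ext g
    simp only [MonoidHom.comp_apply, gbar_of]
    rfl
  have hker : finKer (gbar (MonoidHom.id (ProfiniteCompletion G)) N) = N := by
    apply FinIndexNormal.ext'
    show (gbar (MonoidHom.id (ProfiniteCompletion G)) N).ker = N.N
    rw [hg, QuotientGroup.ker_mk']
  simp only [abMap, limHom_coord]
  obtain ⟨a, ha⟩ := QuotientGroup.mk_surjective
    (x.1 (finKer (gbar (MonoidHom.id (ProfiniteCompletion G)) N)))
  have ha' : x.1 N = QuotientGroup.mk a := by rw [← hker, ← ha]
  rw [← ha, ha']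
  show gbar (MonoidHom.id (ProfiniteCompletion G)) N a = _
  rw [hg]
  rfl

/-- Part 1: continuous isomorphism of completions induces isomorphism on
completions of abelianizations. -/
noncomputable def abCongr (e : ProfiniteCompletion G ≃* ProfiniteCompletion H)
    (he : Continuous e) (he' : Continuous e.symm) :
    ProfiniteCompletion (Abelianization G) ≃* ProfiniteCompletion (Abelianization H) where
  toFun := abMap e.toMonoidHom
  invFun := abMap e.symm.toMonoidHom
  left_inv x := by
    have h1 : e.symm.toMonoidHom.comp e.toMonoidHom = MonoidHom.id (ProfiniteCompletion G) := by
      ext g; simp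
    rw [abMap_comp e.symm.toMonoidHom he' e.toMonoidHom x, h1, abMap_id]
  right_inv x := by
    have h1 : e.toMonoidHom.comp e.symm.toMonoidHom = MonoidHom.id (ProfiniteCompletion H) := by
      ext g; simp
    rw [abMap_comp e.toMonoidHom he e.symm.toMonoidHom x, h1, abMap_id]
  map_mul' := map_mul _

end PCP
end Ab

section ProdFin
open QuotientGroup PCP

namespace PCP

instance pcCommGroup {A : Type*} [CommGroup A] : CommGroup (ProfiniteCompletion A) :=
  { (inferInstance : Group (ProfiniteCompletion A)) with
    mul_comm := fun x y => pc_ext (fun N => mul_comm _ _) }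

def botFin (G : Type*) [Group G] [Finite G] : FinIndexNormal G :=
  ⟨⊥, inferInstance, @Subgroup.finiteIndex_of_finite_quotient _ _ ⊥ (Quotient.finite _)⟩

/-- for finite groups, the completion is the group itself -/
noncomputable def pcFinite (G : Type*) [Group G] [Finite G] :
    G ≃* ProfiniteCompletion G := by
  apply MulEquiv.ofBijective (profiniteCompletionMap G)
  constructor
  · intro g g' hgg
    have h1 : (profiniteCompletionMap G g).1 (botFin G) =
        (profiniteCompletionMap G g').1 (botFin G) := by rw [hgg]
    have h2 : (g : G ⧸ (botFin G).N) = (g' : G ⧸ (botFin G).N) := h1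
    have h3 := QuotientGroup.eq.mp h2
    exact inv_mul_eq_one.mp (by simpa [botFin] using h3)
  · intro x
    obtain ⟨a, ha⟩ := QuotientGroup.mk_surjective (x.1 (botFin G))
    refine ⟨a, pc_ext fun N => ?_⟩
    have hb : (⊥ : Subgroup G) ≤ N.N := bot_le
    rw [← x.2 (botFin G) N hb, ← ha]
    rfl

variable {A B : Type*} [CommGroup A] [CommGroup B]

noncomputable def pcProdHom : ProfiniteCompletion (A × B) →*
    ProfiniteCompletion A × ProfiniteCompletion B :=
  (pcMap (MonoidHom.fst A B)).prod (pcMap (MonoidHom.snd A B))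

noncomputable def pcProdInv : ProfiniteCompletion A × ProfiniteCompletion B →*
    ProfiniteCompletion (A × B) :=
  ((pcMap (MonoidHom.inl A B)).comp (MonoidHom.fst _ _)) *
    ((pcMap (MonoidHom.inr A B)).comp (MonoidHom.snd _ _))

lemma pcProdHom_continuous : Continuous (pcProdHom (A := A) (B := B)) :=
  Continuous.prodMk (pcMap_continuous _) (pcMap_continuous _)

lemma pcProdInv_continuous : Continuous (pcProdInv (A := A) (B := B)) := by
  apply Continuous.mul
  · exact (pcMap_continuous _).comp continuous_fst
  · exact (pcMap_continuous _).comp continuous_snd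

/-- completion of a product -/
noncomputable def pcProd :
    ProfiniteCompletion (A × B) ≃* ProfiniteCompletion A × ProfiniteCompletion B where
  toFun := pcProdHom
  invFun := pcProdInv
  left_inv z := by
    have h : (fun z => pcProdInv (pcProdHom z)) = (fun z : ProfiniteCompletion (A × B) => z) := by
      apply cont_ext (pcProdInv_continuous.comp pcProdHom_continuous) continuous_id
      intro g
      show pcProdInv (pcProdHom (profiniteCompletionMap _ g)) = profiniteCompletionMap _ g
      have h1 : pcProdHom (profiniteCompletionMap (A × B) g) =
          (profiniteCompletionMap A g.1, profiniteCompletionMap B g.2) := by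
        simp [pcProdHom]
      rw [h1]
      show pcMap (MonoidHom.inl A B) (profiniteCompletionMap A g.1) *
        pcMap (MonoidHom.inr A B) (profiniteCompletionMap B g.2) = _
      rw [pcMap_iota, pcMap_iota, ← map_mul]
      congr 1
      simp
    exact congrFun h z
  right_inv z := by
    have h : (fun z => pcProdHom (pcProdInv z)) =
        (fun z : ProfiniteCompletion A × ProfiniteCompletion B => z) := by
      apply Continuous.ext_on (denseRange_iota.prodMap denseRange_iota)
        (pcProdHom_continuous.comp pcProdInv_continuous) continuous_id
      intro p hp
      obtain ⟨⟨a, b⟩, hab⟩ := hp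
      have ha : profiniteCompletionMap A a = p.1 := congrArg Prod.fst hab
      have hb : profiniteCompletionMap B b = p.2 := congrArg Prod.snd hab
      show pcProdHom (pcProdInv p) = p
      have hp2 : p = (profiniteCompletionMap A a, profiniteCompletionMap B b) := by
        rw [ha, hb]
      subst hp2
      have h1 : pcProdInv (profiniteCompletionMap A a, profiniteCompletionMap B b) =
          profiniteCompletionMap (A × B) (a, b) := by
        show pcMap (MonoidHom.inl A B) (profiniteCompletionMap A a) *
          pcMap (MonoidHom.inr A B) (profiniteCompletionMap B b) = _
        rw [pcMap_iota, pcMap_iota, ← map_mul]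
        congr 1
        simp
      rw [h1]
      simp [pcProdHom]
    exact congrFun h z
  map_mul' := map_mul _

end PCP
end ProdFin

section Zfacts
open QuotientGroup PCP

namespace PCP

abbrev Zm := Multiplicative ℤ

/-- the subgroup `mℤ` of `Multiplicative ℤ` -/
def S (m : ℤ) : Subgroup Zm := AddSubgroup.toSubgroup (AddSubgroup.zmultiples m)

lemma mem_S {m : ℤ} {a : Zm} : a ∈ S m ↔ m ∣ a.toAdd := by
  show a.toAdd ∈ AddSubgroup.zmultiples m ↔ _
  exact Int.mem_zmultiples_iff

lemma S_le {m m' : ℤ} (h : m' ∣ m) : S m ≤ S m' := by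
  intro a ha
  rw [mem_S] at ha ⊢
  exact h.trans ha

lemma S_finiteIndex {m : ℤ} (hm : m ≠ 0) : (S m).FiniteIndex := by
  haveI : NeZero m.natAbs := ⟨Int.natAbs_ne_zero.mpr hm⟩
  have hker : S m = (AddMonoidHom.toMultiplicative
      (Int.castAddHom (ZMod m.natAbs))).ker := by
    ext a
    rw [mem_S, MonoidHom.mem_ker]
    show _ ↔ ((a.toAdd : ZMod m.natAbs) = (0 : ZMod m.natAbs))
    rw [ZMod.intCast_zmod_eq_zero_iff_dvd, Int.natAbs_dvd]
  rw [hker]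
  infer_instance

/-- classification of finite-index subgroups of `ℤ` -/
lemma zcls (N : FinIndexNormal Zm) : ∃ m : ℤ, m ≠ 0 ∧ N.N = S m := by
  obtain ⟨m, hm⟩ := Int.subgroup_cyclic (AddSubgroup.toSubgroup.symm N.N)
  have hNm : N.N = S m := by
    rw [S, AddSubgroup.zmultiples_eq_closure, ← hm]
    exact (AddSubgroup.toSubgroup.apply_symm_apply N.N).symm
  refine ⟨m, ?_, hNm⟩
  intro hm0
  subst hm0
  have hbot : N.N = ⊥ := by
    rw [hNm]
    ext a
    simp only [mem_S, zero_dvd_iff, Subgroup.mem_bot]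
    constructor
    · intro h; exact Multiplicative.toAdd.injective h
    · intro h; rw [h]; rfl
  have := N.finiteIndex.index_ne_zero
  rw [hbot, Subgroup.index_bot] at this
  exact this (Nat.card_eq_zero_of_infinite)

/-- `mℤ` as a FinIndexNormal subgroup -/
def NS (m : ℤ) (hm : m ≠ 0) : FinIndexNormal Zm := ⟨S m, inferInstance, S_finiteIndex hm⟩

/-- the profinite completion of `ℤ` is torsion-free -/
lemma pcZ_torsionfree (x : ProfiniteCompletion Zm) (n : ℕ) (hn : 0 < n) (hx : x ^ n = 1) :
    x = 1 := by
  apply pc_ext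
  intro N
  obtain ⟨m, hm, hNm⟩ := zcls N
  have hnm : (n : ℤ) * m ≠ 0 := mul_ne_zero (by exact_mod_cast hn.ne') hm
  set M := NS ((n : ℤ) * m) hnm with hM
  have hle : M.N ≤ N.N := by rw [hNm]; exact S_le (dvd_mul_left m n)
  obtain ⟨a, ha⟩ := QuotientGroup.mk_surjective (x.1 M)
  have h1 : (x.1 M) ^ n = 1 := by
    have := congrArg (fun w : ProfiniteCompletion Zm => w.1 M) hx
    simpa using this
  have h2 : (QuotientGroup.mk (a ^ n) : Zm ⧸ M.N) = 1 := by
    rw [← h1, ← ha]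
    rfl
  have h3 : a ^ n ∈ M.N := (QuotientGroup.eq_one_iff _).mp h2
  have h4 : (n : ℤ) * m ∣ (a ^ n).toAdd := mem_S.mp h3
  rw [toAdd_pow, nsmul_eq_mul] at h4
  have h5 : m ∣ a.toAdd := by
    rcases h4 with ⟨c, hc⟩
    refine ⟨c, ?_⟩
    have hn0 : (n : ℤ) ≠ 0 := by exact_mod_cast hn.ne'
    apply mul_left_cancel₀ hn0
    rw [show (n : ℤ) * (m * c) = n * m * c by ring, ← hc]
  have h6 : a ∈ N.N := by rw [hNm]; exact mem_S.mpr h5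
  calc x.1 N = transMap M N hle (x.1 M) := (x.2 M N hle).symm
    _ = QuotientGroup.mk a := by rw [← ha]; rfl
    _ = 1 := (QuotientGroup.eq_one_iff _).mpr h6

/-- every element of the completion of ℤ is `ι a` times a square -/
lemma pcZ_sq (x : ProfiniteCompletion Zm) :
    ∃ (a : Zm) (y : ProfiniteCompletion Zm), x = profiniteCompletionMap Zm a * y ^ 2 := by
  classical
  set N₂ : FinIndexNormal Zm := NS 2 two_ne_zero with hN₂
  obtain ⟨a, ha⟩ := QuotientGroup.mk_surjective (x.1 N₂)
  refine ⟨a, ?_⟩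
  set z := x * (profiniteCompletionMap Zm a)⁻¹ with hz
  have hz2 : z.1 N₂ = 1 := by
    rw [hz, coord_mul, coord_inv, coord_iota, ← ha, mul_inv_cancel]
  -- data for each N
  have hm0 : ∀ N : FinIndexNormal Zm, (zcls N).choose ≠ 0 := fun N => (zcls N).choose_spec.1
  have hmN : ∀ N : FinIndexNormal Zm, N.N = S ((zcls N).choose) := fun N => (zcls N).choose_spec.2
  let mN : FinIndexNormal Zm → ℤ := fun N => (zcls N).choose
  let D : FinIndexNormal Zm → FinIndexNormal Zm := fun N => NS (2 * mN N) (by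
    exact mul_ne_zero two_ne_zero (hm0 N))
  have hD : ∀ N, (D N).N = S (2 * mN N) := fun N => rfl
  have hDN : ∀ N, (D N).N ≤ N.N := fun N => by
    rw [hD, hmN N]
    exact S_le (dvd_mul_left (mN N) 2)
  have hDN₂ : ∀ N, (D N).N ≤ N₂.N := fun N => by
    rw [hD]
    exact S_le (dvd_mul_right 2 (mN N))
  let b : FinIndexNormal Zm → Zm := fun N => (QuotientGroup.mk_surjective (z.1 (D N))).choose
  have hb : ∀ N, (QuotientGroup.mk (b N) : Zm ⧸ (D N).N) = z.1 (D N) := fun N =>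
    (QuotientGroup.mk_surjective (z.1 (D N))).choose_spec
  have hbe : ∀ N, (2 : ℤ) ∣ (b N).toAdd := by
    intro N
    have h1 : transMap (D N) N₂ (hDN₂ N) (z.1 (D N)) = z.1 N₂ := z.2 _ _ _
    rw [hz2, ← hb N] at h1
    have h2 : b N ∈ N₂.N := (QuotientGroup.eq_one_iff _).mp h1
    exact mem_S.mp h2
  let c : FinIndexNormal Zm → Zm := fun N => Multiplicative.ofAdd ((b N).toAdd / 2)
  have hc2 : ∀ N, (c N) ^ 2 = b N := by
    intro N
    have : ((c N) ^ 2).toAdd = (b N).toAdd := by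
      rw [toAdd_pow, nsmul_eq_mul]
      push_cast
      exact Int.mul_ediv_cancel' (hbe N)
    exact Multiplicative.toAdd.injective this
  have hcompat : ∀ (N N' : FinIndexNormal Zm) (h : N.N ≤ N'.N),
      transMap N N' h (QuotientGroup.mk (c N)) = QuotientGroup.mk (c N') := by
    intro N N' h
    have hdvd : mN N' ∣ mN N := by
      have : (Multiplicative.ofAdd (mN N)) ∈ S (mN N') := by
        rw [← hmN N']
        apply h
        rw [hmN N]
        exact mem_S.mpr dvd_rfl
      exact mem_S.mp this
    have hDD : (D N).N ≤ (D N').N := by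
      rw [hD, hD]
      exact S_le (mul_dvd_mul_left 2 hdvd)
    have h1 : transMap (D N) (D N') hDD (z.1 (D N)) = z.1 (D N') := z.2 _ _ _
    rw [← hb N, ← hb N'] at h1
    have h2 : (b N)⁻¹ * b N' ∈ (D N').N := QuotientGroup.eq.mp (by exact h1)
    have h3 : 2 * mN N' ∣ (b N').toAdd - (b N).toAdd := by
      have := mem_S.mp h2
      simpa [sub_eq_neg_add] using this
    show (QuotientGroup.mk (c N) : Zm ⧸ N'.N) = QuotientGroup.mk (c N')
    rw [QuotientGroup.eq]
    rw [hmN N', mem_S]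
    have h4 : mN N' ∣ (b N').toAdd / 2 - (b N).toAdd / 2 := by
      rcases h3 with ⟨t, ht⟩
      refine ⟨t, ?_⟩
      apply mul_left_cancel₀ (two_ne_zero (α := ℤ))
      rw [mul_sub, Int.mul_ediv_cancel' (hbe N'), Int.mul_ediv_cancel' (hbe N), ht]
      ring
    simpa [sub_eq_neg_add, mN, c] using h4
  let y : ProfiniteCompletion Zm := ⟨fun N => QuotientGroup.mk (c N), hcompat⟩
  refine ⟨y, ?_⟩
  have hy2 : y ^ 2 = z := by
    apply pc_ext
    intro N
    have h1 : (y ^ 2).1 N = (QuotientGroup.mk (c N) : Zm ⧸ N.N) ^ 2 := rfl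
    have h2 : ((QuotientGroup.mk (c N) : Zm ⧸ N.N)) ^ 2 = QuotientGroup.mk ((c N) ^ 2) := by
      rw [← QuotientGroup.mk'_apply, ← map_pow]
      rfl
    rw [h1, h2, hc2 N, ← (z.2 (D N) N (hDN N)), ← hb N]
    rfl
  rw [hy2, hz]
  rw [mul_comm x _, ← mul_assoc, mul_inv_cancel, one_mul]

end PCP
end Zfacts

section Counting
open QuotientGroup PCP

namespace PCP

abbrev Q₂ := Multiplicative (ZMod 2)

/-- iso invariance of hom counting -/
lemma card_hom_congr {X Y Q : Type*} [Group X] [Group Y] [Group Q] (e : X ≃* Y) :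
    Nat.card (X →* Q) = Nat.card (Y →* Q) := by
  apply Nat.card_congr
  exact {
    toFun := fun f => f.comp e.symm.toMonoidHom
    invFun := fun g => g.comp e.toMonoidHom
    left_inv := fun f => by ext x; simp
    right_inv := fun g => by ext y; simp }

/-- hom counting is multiplicative on products -/
lemma card_hom_prod {X Y Q : Type*} [Group X] [Group Y] [CommGroup Q] :
    Nat.card (X × Y →* Q) = Nat.card (X →* Q) * Nat.card (Y →* Q) := by
  rw [← Nat.card_prod]
  apply Nat.card_congr
  exact {
    toFun := fun f => (f.comp (MonoidHom.inl X Y), f.comp (MonoidHom.inr X Y))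
    invFun := fun p => (p.1.comp (MonoidHom.fst X Y)) * (p.2.comp (MonoidHom.snd X Y))
    left_inv := fun f => by
      ext ⟨x, y⟩
      show f (x, 1) * f (1, y) = f (x, y)
      rw [← map_mul]
      congr 1
      simp
    right_inv := fun p => by
      have h1 : ((p.1.comp (MonoidHom.fst X Y)) * (p.2.comp (MonoidHom.snd X Y))).comp
          (MonoidHom.inl X Y) = p.1 := by
        ext x; simp
      have h2 : ((p.1.comp (MonoidHom.fst X Y)) * (p.2.comp (MonoidHom.snd X Y))).comp
          (MonoidHom.inr X Y) = p.2 := by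
        ext y; simp
      show (_, _) = p
      rw [h1, h2] }

lemma card_hom_trivial {X Q : Type*} [Group X] [Group Q] [Subsingleton X] :
    Nat.card (X →* Q) = 1 := by
  haveI : Unique (X →* Q) := {
    default := 1
    uniq := fun f => by
      ext x
      rw [Subsingleton.elim x 1, map_one]
      rfl }
  exact Nat.card_unique

/-- `Fin (n+1) → X` splits -/
def piSuccEquiv (n : ℕ) (X : Type*) [Group X] : (Fin (n + 1) → X) ≃* X × (Fin n → X) :=
  { (Fin.consEquiv (fun _ => X)).symm with map_mul' := fun f g => rfl }

lemma card_hom_pi {X Q : Type*} [Group X] [CommGroup Q] (n : ℕ) :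
    Nat.card ((Fin n → X) →* Q) = (Nat.card (X →* Q)) ^ n := by
  induction n with
  | zero =>
    rw [pow_zero]
    haveI : Subsingleton (Fin 0 → X) := by
      constructor; intro a b; funext i; exact absurd i.2 (Nat.not_lt_zero _)
    exact card_hom_trivial
  | succ n ih =>
    rw [card_hom_congr (piSuccEquiv n X), card_hom_prod, ih, pow_succ, mul_comm]

lemma sq_Q2 (q : Q₂) : q ^ 2 = 1 := by
  have : q.toAdd + q.toAdd = 0 := by
    have := ZMod.natCast_self 2
    revert q
    decide
  have h2 : (q ^ 2).toAdd = (0 : ZMod 2) := by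
    rw [toAdd_pow]
    show (2 : ℕ) • q.toAdd = 0
    rw [two_nsmul]
    exact this
  exact Multiplicative.toAdd.injective h2

/-- the completion of ℤ has exactly two homs to `ℤ/2` -/
lemma card_hom_pcZ : Nat.card (ProfiniteCompletion Zm →* Q₂) = 2 := by
  have e1 : (ProfiniteCompletion Zm →* Q₂) ≃ (Zm →* Q₂) := {
    toFun := fun F => F.comp (profiniteCompletionMap Zm)
    invFun := fun g => pcExt g
    left_inv := fun F => by
      refine MonoidHom.ext fun x => ?_
      obtain ⟨a, y, hx⟩ := pcZ_sq x
      rw [hx, map_mul, map_mul, map_pow, map_pow, sq_Q2, sq_Q2]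
      congr 1
    right_inv := fun g => pcExt_comp_iota g }
  rw [Nat.card_congr e1]
  have e2 : (Zm →* Q₂) ≃ (ℤ →+ ZMod 2) := AddMonoidHom.toMultiplicative.symm
  rw [Nat.card_congr e2, Nat.card_congr (zmultiplesHom (ZMod 2)).symm]
  rw [Nat.card_eq_fintype_card, ZMod.card]

lemma card_hom_ne_zero {X Q : Type*} [Group X] [Group Q] [Finite X] [Finite Q] :
    Nat.card (X →* Q) ≠ 0 := by
  haveI : Finite (X →* Q) := Finite.of_injective _ (DFunLike.coe_injective (F := X →* Q))
  exact Nat.card_ne_zero.mpr ⟨⟨1⟩, inferInstance⟩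

-- torsion lemmas

/-- torsion subgroups are isomorphic under isomorphisms -/
def torsionCongr {X Y : Type*} [CommGroup X] [CommGroup Y] (e : X ≃* Y) :
    CommGroup.torsion X ≃* CommGroup.torsion Y where
  toFun t := ⟨e t.1, e.toMonoidHom.isOfFinOrder t.2⟩
  invFun t := ⟨e.symm t.1, e.symm.toMonoidHom.isOfFinOrder t.2⟩
  left_inv t := by ext; simp
  right_inv t := by ext; simp
  map_mul' s t := by ext; simp

/-- torsion of `X × Y` for torsion-free `X` -/
def torsionProd {X Y : Type*} [CommGroup X] [CommGroup Y]
    (hX : ∀ x : X, IsOfFinOrder x → x = 1) :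
    CommGroup.torsion (X × Y) ≃* CommGroup.torsion Y where
  toFun u := ⟨u.1.2, (MonoidHom.snd X Y).isOfFinOrder u.2⟩
  invFun t := ⟨(1, t.1), by
    obtain ⟨n, hn, ht⟩ := isOfFinOrder_iff_pow_eq_one.mp t.2
    apply isOfFinOrder_iff_pow_eq_one.mpr
    exact ⟨n, hn, by
      have : ((1 : X), t.1) ^ n = ((1 : X) ^ n, t.1 ^ n) := rfl
      rw [this, one_pow, ht]
      rfl⟩⟩
  left_inv u := by
    ext
    · exact (hX u.1.1 ((MonoidHom.fst X Y).isOfFinOrder u.2)).symm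
    · rfl
  right_inv t := rfl
  map_mul' s t := rfl

/-- torsion of a finite group is everything -/
def torsionFinite {T : Type*} [CommGroup T] [Finite T] : CommGroup.torsion T ≃* T where
  toFun t := t.1
  invFun t := ⟨t, isOfFinOrder_of_finite t⟩
  left_inv t := rfl
  right_inv t := rfl
  map_mul' s t := rfl

lemma pcZpow_torsionfree (n : ℕ) (x : Fin n → ProfiniteCompletion Zm)
    (hx : IsOfFinOrder x) : x = 1 := by
  obtain ⟨k, hk, hxk⟩ := isOfFinOrder_iff_pow_eq_one.mp hx
  funext i
  have : (x i) ^ k = 1 := by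
    have := congrFun hxk i
    exact this
  exact pcZ_torsionfree (x i) k hk this

end PCP
end Counting

section Assembly
open QuotientGroup PCP DirectSum

namespace PCP

/-- transfer an additive equivalence to a multiplicative one -/
def mulOfAdd {A X : Type*} [CommGroup A] [AddCommGroup X] (f : Additive A ≃+ X) :
    A ≃* Multiplicative X where
  toFun a := Multiplicative.ofAdd (f (Additive.ofMul a))
  invFun x := Additive.toMul (f.symm (Multiplicative.toAdd x))
  left_inv a := by simp
  right_inv x := by simp
  map_mul' a b := by
    show Multiplicative.ofAdd (f (Additive.ofMul a + Additive.ofMul b)) = _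
    rw [map_add]
    rfl

/-- `Multiplicative` of a product -/
def mulProd (X Y : Type*) [AddCommGroup X] [AddCommGroup Y] :
    Multiplicative (X × Y) ≃* Multiplicative X × Multiplicative Y where
  toFun z := (Multiplicative.ofAdd (Multiplicative.toAdd z).1,
    Multiplicative.ofAdd (Multiplicative.toAdd z).2)
  invFun p := Multiplicative.ofAdd (Multiplicative.toAdd p.1, Multiplicative.toAdd p.2)
  left_inv z := rfl
  right_inv p := rfl
  map_mul' z w := rfl

/-- `Multiplicative` of a pi type -/
def mulPi (ι X : Type*) [AddCommGroup X] :
    Multiplicative (ι → X) ≃* (ι → Multiplicative X) where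
  toFun z i := Multiplicative.ofAdd (Multiplicative.toAdd z i)
  invFun p := Multiplicative.ofAdd (fun i => Multiplicative.toAdd (p i))
  left_inv z := rfl
  right_inv p := rfl
  map_mul' z w := rfl

/-- `Multiplicative (Fin n →₀ ℤ) ≃* Fin n → Zm` -/
noncomputable def mulFinsuppInt (n : ℕ) : Multiplicative (Fin n →₀ ℤ) ≃* (Fin n → Zm) :=
  (AddEquiv.toMultiplicative Finsupp.addEquivFunOnFinite).trans (mulPi (Fin n) ℤ)

instance pcUnique {X : Type*} [Group X] [Subsingleton X] :
    Unique (ProfiniteCompletion X) := by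
  have hq : ∀ (N : FinIndexNormal X) (u v : X ⧸ N.N), u = v := by
    intro N u v
    obtain ⟨a, rfl⟩ := QuotientGroup.mk_surjective u
    obtain ⟨b, rfl⟩ := QuotientGroup.mk_surjective v
    rw [Subsingleton.elim a b]
  exact ⟨⟨1⟩, fun x => pc_ext fun N => hq N _ _⟩

/-- completion of `ℤ^n` -/
noncomputable def pcPi : (n : ℕ) →
    ProfiniteCompletion (Fin n → Zm) ≃* (Fin n → ProfiniteCompletion Zm)
  | 0 => MulEquiv.ofUnique
  | (n+1) => ((pcCongr (piSuccEquiv n Zm)).trans (pcProd.trans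
      (MulEquiv.prodCongr (MulEquiv.refl _) (pcPi n)))).trans
        (piSuccEquiv n (ProfiniteCompletion Zm)).symm

/-- main part 2 lemma: finitely generated comm groups with isomorphic
profinite completions are isomorphic -/
lemma main2 {A B : Type*} [CommGroup A] [CommGroup B]
    (θ : ProfiniteCompletion A ≃* ProfiniteCompletion B)
    (hA : Group.FG A) (hB : Group.FG B) : Nonempty (A ≃* B) := by
  haveI : AddGroup.FG (Additive A) := GroupFG.iff_add_fg.mp hA
  haveI : AddGroup.FG (Additive B) := GroupFG.iff_add_fg.mp hB
  obtain ⟨nA, ιA, fιA, pA', hpA, eA', ⟨fA⟩⟩ :=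
    AddCommGroup.equiv_free_prod_directSum_zmod (Additive A)
  obtain ⟨nB, ιB, fιB, pB', hpB, eB', ⟨fB⟩⟩ :=
    AddCommGroup.equiv_free_prod_directSum_zmod (Additive B)
  haveI : ∀ i : ιA, NeZero (pA' i ^ eA' i) := fun i => ⟨(pow_pos (hpA i).pos _).ne'⟩
  haveI : ∀ i : ιB, NeZero (pB' i ^ eB' i) := fun i => ⟨(pow_pos (hpB i).pos _).ne'⟩
  haveI hfA : Finite (⨁ i : ιA, ZMod (pA' i ^ eA' i)) :=
    Finite.of_equiv _ DFinsupp.equivFunOnFintype.symm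
  haveI hfB : Finite (⨁ i : ιB, ZMod (pB' i ^ eB' i)) :=
    Finite.of_equiv _ DFinsupp.equivFunOnFintype.symm
  set TA := Multiplicative (⨁ i : ιA, ZMod (pA' i ^ eA' i)) with hTA
  set TB := Multiplicative (⨁ i : ιB, ZMod (pB' i ^ eB' i)) with hTB
  haveI : Finite TA := by rw [hTA]; exact Finite.of_equiv _ (Equiv.refl _)
  haveI : Finite TB := by rw [hTB]; exact Finite.of_equiv _ (Equiv.refl _)
  -- multiplicative structure equivalences
  let mA : A ≃* (Fin nA → Zm) × TA :=
    (mulOfAdd fA).trans ((mulProd _ _).trans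
      (MulEquiv.prodCongr (mulFinsuppInt nA) (MulEquiv.refl TA)))
  let mB : B ≃* (Fin nB → Zm) × TB :=
    (mulOfAdd fB).trans ((mulProd _ _).trans
      (MulEquiv.prodCongr (mulFinsuppInt nB) (MulEquiv.refl TB)))
  -- completions
  let cA : ProfiniteCompletion A ≃* (Fin nA → ProfiniteCompletion Zm) × TA :=
    (pcCongr mA).trans (pcProd.trans (MulEquiv.prodCongr (pcPi nA) (pcFinite TA).symm))
  let cB : ProfiniteCompletion B ≃* (Fin nB → ProfiniteCompletion Zm) × TB :=
    (pcCongr mB).trans (pcProd.trans (MulEquiv.prodCongr (pcPi nB) (pcFinite TB).symm))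
  let Ξ : (Fin nA → ProfiniteCompletion Zm) × TA ≃* (Fin nB → ProfiniteCompletion Zm) × TB :=
    (cA.symm.trans θ).trans cB
  -- torsion comparison gives TA ≃* TB
  let tAB : TA ≃* TB :=
    (((torsionFinite.symm.trans (torsionProd (pcZpow_torsionfree nA)).symm).trans
      (torsionCongr Ξ)).trans (torsionProd (pcZpow_torsionfree nB))).trans torsionFinite
  -- hom counting gives nA = nB
  have hcount : (2 : ℕ) ^ nA * Nat.card (TA →* Q₂) = 2 ^ nB * Nat.card (TB →* Q₂) := by
    have h1 := card_hom_congr (Q := Q₂) Ξ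
    rw [card_hom_prod, card_hom_prod, card_hom_pi, card_hom_pi, card_hom_pcZ] at h1
    exact h1
  have hTT : Nat.card (TA →* Q₂) = Nat.card (TB →* Q₂) := card_hom_congr tAB
  have hn : nA = nB := by
    rw [← hTT] at hcount
    have h2 : (2:ℕ) ^ nA = 2 ^ nB :=
      Nat.eq_of_mul_eq_mul_right (Nat.pos_of_ne_zero card_hom_ne_zero) hcount
    exact Nat.pow_right_injective (le_refl 2) h2
  subst hn
  exact ⟨(mA.trans (MulEquiv.prodCongr (MulEquiv.refl _) tAB)).trans mB.symm⟩

end PCP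
end Assembly

theorem profinite_iso_abelianization (G₁ G₂ : Type*) [Group G₁] [Group G₂]
    (e : ProfiniteCompletion G₁ ≃* ProfiniteCompletion G₂)
    (he : Continuous e) (he' : Continuous e.symm) :
    Nonempty (ProfiniteCompletion (Abelianization G₁) ≃* ProfiniteCompletion (Abelianization G₂)) ∧
      (Group.FG (Abelianization G₁) → Group.FG (Abelianization G₂) →
        Nonempty (Abelianization G₁ ≃* Abelianization G₂)) := by
  refine ⟨⟨PCP.abCongr e he he'⟩, fun h1 h2 => PCP.main2 (PCP.abCongr e he he') h1 h2⟩
end
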